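/- arXiv:1409.3470 — 4 statements merged into one kernel-verified Lean document; each statement's English description precedes it below -/
import Mathlib

section
/- Let f : X → X be a homeomorphism of a compact metric space X such that the restriction of f to its nonwandering set Ω(f) has the pseudo-orbit tracing property. If f admits a positively expansive Borel probability measure, then the topological entropy of f is positive. -/
/-!
Write `Ω` for the nonwandering set. Every orbit eventually follows a pseudo-orbit in `Ω`, and by
compactness some tail of it is returning: each of its points chains back to its first point
inside `Ω`.

If two returning pseudo-orbits in `Ω` can start close and later separate, close both up into
periodic pseudo-orbits `A`, `B` with a common period `L`. Concatenating `L`-blocks of `A` and `B`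
along any word of length `k` gives a pseudo-orbit in `Ω`; shadowing these produces `2 ^ k` points
that are separated within time `k L`, so `h(f) ≥ log 2 / L > 0`.

Otherwise two points whose orbits are tracked by returning pseudo-orbits from a common time `T`
on, and which are close enough up to time `T`, stay `e`-close forever. Every point is tracked
from some time on, so for some `T` a set of such points of small diameter has positive measure;
it lies in a single `Φ_e(x)`, contradicting positive expansiveness.
-/

open MeasureTheory Filter Set ENNReal

/-- `Φ_δ(x) = {y : d(f^i x, f^i y) ≤ δ for all i ∈ ℕ}`. -/
def phiSet {X : Type*} [MetricSpace X] (f : X → X) (δ : ℝ) (x : X) : Set X :=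
  {y | ∀ i : ℕ, dist (f^[i] x) (f^[i] y) ≤ δ}

/-- A Borel probability measure is positively expansive if there is an
expansivity constant `e > 0` with `μ (Φ_e x) = 0` for all `x`. -/
def IsPositivelyExpansive {X : Type*} [MetricSpace X] [MeasurableSpace X]
    (f : X → X) (μ : Measure X) : Prop :=
  ∃ e : ℝ, 0 < e ∧ ∀ x : X, μ (phiSet f e x) = 0

/-- `M_f(n, ε)`: the minimal number of `ε`-balls in the metric
`(x, y) ↦ max_{0 ≤ i ≤ n} d(f^i x, f^i y)` needed to cover `X`. -/
noncomputable def coverNum {X : Type*} [MetricSpace X] (f : X → X) (n : ℕ) (ε : ℝ) : ℕ :=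
  sInf {k : ℕ | ∃ S : Finset X, S.card = k ∧
    ∀ x : X, ∃ y ∈ S, ∀ i ≤ n, dist (f^[i] y) (f^[i] x) < ε}

/-- The topological entropy
`h(f) = lim_{ε → 0} limsup_{n → ∞} (1/n) log M_f(n, ε)`; since the inner
`limsup` is monotone as `ε` decreases, the limit is the supremum over `ε > 0`. -/
noncomputable def topEntropy {X : Type*} [MetricSpace X] (f : X → X) : ℝ≥0∞ :=
  ⨆ (ε : ℝ) (_ : 0 < ε),
    Filter.atTop.limsup fun n : ℕ => ENNReal.ofReal (Real.log (coverNum f n ε) / n)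

/-- The nonwandering set of `f`. -/
def nonWanderingSet {X : Type*} [TopologicalSpace X] (f : X → X) : Set X :=
  {x | ∀ U ∈ nhds x, ∃ n : ℕ, 0 < n ∧ (f^[n] '' U ∩ U).Nonempty}

/-- The `i`-th iterate of a homeomorphism, `i ∈ ℤ`. -/
noncomputable def iterZ {X : Type*} [TopologicalSpace X] (f : X ≃ₜ X) (i : ℤ) (x : X) : X :=
  if 0 ≤ i then (⇑f)^[i.toNat] x else (⇑f.symm)^[(-i).toNat] x

/-- The restriction of the homeomorphism `f` to the invariant set `S` has the
pseudo-orbit tracing property: for all `ε > 0` there is `δ > 0` such that every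
`δ`-pseudo-orbit lying in `S` is `ε`-shadowed by the orbit of a point of `S`. -/
def POTPOn {X : Type*} [MetricSpace X] (f : X ≃ₜ X) (S : Set X) : Prop :=
  ∀ ε > (0 : ℝ), ∃ δ > (0 : ℝ), ∀ x : ℤ → X, (∀ i : ℤ, x i ∈ S) →
    (∀ i : ℤ, dist (f (x i)) (x (i + 1)) ≤ δ) →
    ∃ y ∈ S, ∀ i : ℤ, dist (iterZ f i y) (x i) ≤ ε

open Function Relation Metric

section Chains

variable {α : Type*} {r : α → α → Prop}

theorem Relation.TransGen.exists_chain_extension {c : ℕ → α} {m : ℕ} {b : α}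
    (h : TransGen r (c m) b) :
    ∃ n > m, ∃ c' : ℕ → α, (∀ i ≤ m, c' i = c i) ∧ c' n = b ∧
      ∀ i, m ≤ i → i < n → r (c' i) (c' (i + 1)) := by
  induction h with
  | single hb =>
    refine ⟨m + 1, by omega, update c (m + 1) _, fun i hi => update_of_ne (by omega) _ _,
      update_self .., fun i hmi hi => ?_⟩
    obtain rfl : i = m := by omega
    rwa [update_self, update_of_ne (by omega)]
  | @tail b d _ hbd ih =>
    obtain ⟨n, hmn, c', hc'c, hc'n, hstep⟩ := ih
    refine ⟨n + 1, by omega, update c' (n + 1) d, fun i hi => ?_, update_self .., ?_⟩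
    · rw [update_of_ne (by omega), hc'c i hi]
    · intro i hmi hi
      rcases Nat.lt_succ_iff_lt_or_eq.1 hi with hi | rfl
      · rw [update_of_ne (by omega), update_of_ne (by omega)]
        exact hstep i hmi hi
      · rwa [update_self, update_of_ne (by omega), hc'n]

theorem exists_periodic_of_closed_chain {c : ℕ → α} {n : ℕ} (hn : 0 < n) (hclosed : c n = c 0)
    (hstep : ∀ i < n, r (c i) (c (i + 1))) :
    ∃ P : ℤ → α, Periodic P n ∧ (∀ i, r (P i) (P (i + 1))) ∧ ∀ i < n, P i = c i := by
  have hn' : (0 : ℤ) < n := by exact_mod_cast hn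
  refine ⟨fun i => c (i % n).toNat, fun i => by simp, fun i => ?_, fun i hi => ?_⟩
  · have h0 := Int.emod_nonneg i hn'.ne'
    have hlt := Int.emod_lt_of_pos i hn'
    have hsucc : (i + 1) % n = (i % n + 1) % n := by
      conv_lhs => rw [← Int.emod_add_mul_ediv i n, add_right_comm, Int.add_mul_emod_self_left]
    have := hstep (i % n).toNat (by omega)
    dsimp only
    rcases (show i % n + 1 < n ∨ i % n + 1 = n by omega) with h | h
    · rwa [hsucc, Int.emod_eq_of_lt (by omega) h,
        show (i % n + 1).toNat = (i % n).toNat + 1 by omega]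
    · rw [hsucc, h, Int.emod_self, Int.toNat_zero, ← hclosed]
      rwa [show (i % n).toNat + 1 = n by omega] at this
  · have hi' : (i : ℤ) < n := by exact_mod_cast hi
    simp only [Int.emod_eq_of_lt (Int.natCast_nonneg i) hi', Int.toNat_natCast]

end Chains

theorem Int.dvd_add_one_of_ediv_ne {i L : ℤ} (hL : 0 < L) (h : i / L ≠ (i + 1) / L) :
    L ∣ i + 1 := by
  have hi := Int.emod_add_mul_ediv i L
  have h0 := Int.emod_nonneg i hL.ne'
  have hlt := Int.emod_lt_of_pos i hL
  by_contra hndvd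
  have hne : i % L + 1 ≠ L := fun he => hndvd ⟨i / L + 1, by rw [mul_add, mul_one]; linarith⟩
  exact h ((Int.ediv_emod_unique (r := i % L + 1) hL).2 ⟨by linarith, by omega, by omega⟩).1.symm

section PseudoOrbits

variable {X : Type*} [PseudoMetricSpace X] {f : X → X} {S : Set X}

variable (f S) in
def PseudoStep (δ : ℝ) (u w : X) : Prop :=
  u ∈ S ∧ w ∈ S ∧ dist (f u) w ≤ δ

variable (f S) in
def IsPseudoOrbitOn {ι : Type*} [Add ι] [One ι] (δ : ℝ) (ξ : ι → X) : Prop :=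
  ∀ i, PseudoStep f S δ (ξ i) (ξ (i + 1))

variable (f S) in
def IsReturningPseudoOrbit (κ : ℝ) (ξ : ℕ → X) : Prop :=
  IsPseudoOrbitOn f S κ ξ ∧ ∀ N, TransGen (PseudoStep f S κ) (ξ N) (ξ 0)

theorem PseudoStep.mono {δ δ' : ℝ} {u w : X} (h : PseudoStep f S δ u w) (hδ : δ ≤ δ') :
    PseudoStep f S δ' u w :=
  ⟨h.1, h.2.1, h.2.2.trans hδ⟩

theorem IsPseudoOrbitOn.mono {ι : Type*} [Add ι] [One ι] {δ δ' : ℝ} {ξ : ι → X}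
    (hξ : IsPseudoOrbitOn f S δ ξ) (hδ : δ ≤ δ') : IsPseudoOrbitOn f S δ' ξ :=
  fun i => (hξ i).mono hδ

theorem IsPseudoOrbitOn.reflTransGen {δ : ℝ} {ξ : ℕ → X} (hξ : IsPseudoOrbitOn f S δ ξ)
    {s t : ℕ} (hst : s ≤ t) : ReflTransGen (PseudoStep f S δ) (ξ s) (ξ t) :=
  (reflTransGen_of_succ_of_le (fun i j => PseudoStep f S δ (ξ i) (ξ j))
    (fun i _ => by simpa using hξ i) hst).lift ξ fun _ _ h => h

theorem IsPseudoOrbitOn.ite {δ β : ℝ} {A B : ℤ → X} (hA : IsPseudoOrbitOn f S δ A)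
    (hB : IsPseudoOrbitOn f S δ B) (hβ : 0 ≤ β) {c : ℤ → Bool}
    (hc : ∀ i, c i ≠ c (i + 1) → dist (A (i + 1)) (B (i + 1)) ≤ β) :
    IsPseudoOrbitOn f S (δ + β) fun i => if c i then B i else A i := by
  intro i
  have hδ : δ ≤ δ + β := le_add_of_nonneg_right hβ
  cases hi : c i <;> cases hi' : c (i + 1) <;>
    simp only [hi, hi', Bool.false_eq_true, if_false, if_true]
  · exact (hA i).mono hδ
  · have := hc i (by simp [hi, hi'])
    exact ⟨(hA i).1, (hB i).2.1, (dist_triangle _ _ _).trans (add_le_add (hA i).2.2 this)⟩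
  · have := hc i (by simp [hi, hi'])
    rw [dist_comm] at this
    exact ⟨(hB i).1, (hA i).2.1, (dist_triangle _ _ _).trans (add_le_add (hB i).2.2 this)⟩
  · exact (hB i).mono hδ

theorem IsReturningPseudoOrbit.exists_periodic {κ : ℝ} {ξ : ℕ → X}
    (hξ : IsReturningPseudoOrbit f S κ ξ) (N : ℕ) :
    ∃ n > N, ∃ P : ℤ → X, Periodic P n ∧ IsPseudoOrbitOn f S κ P ∧ ∀ i ≤ N, P i = ξ i := by
  obtain ⟨n, hNn, c, hcξ, hcn, hstep⟩ := (hξ.2 N).exists_chain_extension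
  have hclosed_step : ∀ i < n, PseudoStep f S κ (c i) (c (i + 1)) := fun i hi => by
    rcases lt_or_ge i N with hiN | hiN
    · rw [hcξ i hiN.le, hcξ (i + 1) hiN]
      exact hξ.1 i
    · exact hstep i hiN hi
  obtain ⟨P, hPer, hP, hPc⟩ :=
    exists_periodic_of_closed_chain (by omega) (hcn.trans (hcξ 0 N.zero_le).symm) hclosed_step
  exact ⟨n, hNn, P, hPer, hP, fun i hi => (hPc i (by omega)).trans (hcξ i hi)⟩

end PseudoOrbits

theorem mem_nonWanderingSet_of_mapClusterPt {X : Type*} [TopologicalSpace X] {f : X → X}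
    {x w : X} (h : MapClusterPt w atTop fun n => f^[n] x) : w ∈ nonWanderingSet f := by
  intro U hU
  have hfreq := mapClusterPt_iff_frequently.1 h U hU
  obtain ⟨m, -, hm⟩ := frequently_atTop.1 hfreq 0
  obtain ⟨n, hn, hnU⟩ := frequently_atTop.1 hfreq (m + 1)
  refine ⟨n - m, by omega, f^[n] x, ⟨f^[m] x, hm, ?_⟩, hnU⟩
  rw [← iterate_add_apply, Nat.sub_add_cancel (by omega)]

section Compact

variable {X : Type*} [PseudoMetricSpace X] [CompactSpace X] {f : X → X}

theorem exists_pos_forall_dist_iterate_lt (hf : Continuous f) (n : ℕ) {ρ : ℝ}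
    (hρ : 0 < ρ) : ∃ γ > 0, ∀ x y, dist x y < γ → ∀ i ≤ n, dist (f^[i] x) (f^[i] y) < ρ := by
  have hu : UniformContinuous fun x (i : Fin (n + 1)) => f^[i] x :=
    uniformContinuous_pi.2 fun i => CompactSpace.uniformContinuous_of_continuous (hf.iterate i)
  obtain ⟨γ, hγ, h⟩ := Metric.uniformContinuous_iff.1 hu ρ hρ
  exact ⟨γ, hγ, fun x y hxy i hi =>
    (dist_le_pi_dist _ _ (⟨i, by omega⟩ : Fin (n + 1))).trans_lt (h hxy)⟩

theorem exists_finset_forall_dist_iterate_lt (hf : Continuous f) (n : ℕ)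
    {r : ℝ} (hr : 0 < r) : ∃ S : Finset X, ∀ x, ∃ y ∈ S, ∀ i ≤ n, dist (f^[i] y) (f^[i] x) < r := by
  obtain ⟨γ, hγ, hmod⟩ := exists_pos_forall_dist_iterate_lt hf n hr
  obtain ⟨t, -, ht, hcover⟩ := finite_cover_balls_of_compact (isCompact_univ (X := X)) hγ
  refine ⟨ht.toFinset, fun x => ?_⟩
  obtain ⟨y, hy, hxy⟩ := mem_iUnion₂.1 (hcover (mem_univ x))
  exact ⟨y, ht.mem_toFinset.2 hy, hmod y x (by rwa [dist_comm, ← mem_ball])⟩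

theorem eventually_exists_mem_nonWanderingSet_dist_lt (x : X) {τ : ℝ} (hτ : 0 < τ) :
    ∀ᶠ n in atTop, ∃ z ∈ nonWanderingSet f, dist (f^[n] x) z < τ := by
  have hω : omegaLimit atTop (fun n y => f^[n] y) {x} ⊆ thickening τ (nonWanderingSet f) :=
    fun w hw => self_subset_thickening hτ _ <| mem_nonWanderingSet_of_mapClusterPt <|
      (mem_omegaLimit_singleton_iff_mapClusterPt _ _ _ _).1 hw
  filter_upwards [eventually_mapsTo_of_isOpen_of_omegaLimit_subset _ _ _ isOpen_thickening hω]
    with n hn using mem_thickening_iff.1 (hn rfl)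

theorem eventually_isReturningPseudoOrbit_shift (hf : Continuous f) {S : Set X} {δ κ : ℝ}
    (hδκ : δ < κ) {ξ : ℕ → X} (hξ : IsPseudoOrbitOn f S δ ξ) :
    ∀ᶠ T in atTop, IsReturningPseudoOrbit f S κ fun t => ξ (T + t) := by
  obtain ⟨γ, hγ, hmod⟩ := Metric.uniformContinuous_iff.1
    (CompactSpace.uniformContinuous_of_continuous hf) (κ - δ) (sub_pos.2 hδκ)
  obtain ⟨w, -, hw⟩ := (isCompact_univ (X := X)).exists_mapClusterPt (f := atTop) (u := ξ) (by simp)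
  have hfreq : ∃ᶠ t in atTop, ξ t ∈ ball w (γ / 2) :=
    mapClusterPt_iff_frequently.1 hw _ (ball_mem_nhds w (half_pos hγ))
  obtain ⟨t₁, -, ht₁⟩ := frequently_atTop.1 hfreq 0
  refine eventually_atTop.2 ⟨t₁ + 1, fun T hT => ⟨fun t => ?_, fun N => ?_⟩⟩
  · simpa only [add_assoc] using (hξ (T + t)).mono hδκ.le
  obtain ⟨t₂, ht₂, ht₂w⟩ := frequently_atTop.1 hfreq (T + N)
  -- `ξ` returns near `ξ t₁` after time `T + N`, and from there one jump leads back to `ξ (t₁ + 1)`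
  have hjump : PseudoStep f S κ (ξ t₂) (ξ (t₁ + 1)) := by
    refine ⟨(hξ t₂).1, (hξ t₁).2.1, ?_⟩
    have hclose : dist (ξ t₂) (ξ t₁) < γ := by
      linarith [dist_triangle_right (ξ t₂) (ξ t₁) w, mem_ball.1 ht₁, mem_ball.1 ht₂w]
    linarith [dist_triangle (f (ξ t₂)) (f (ξ t₁)) (ξ (t₁ + 1)), hmod hclose, (hξ t₁).2.2]
  have hξκ := hξ.mono hδκ.le
  exact .trans_right (hξκ.reflTransGen ht₂) (.head' hjump (hξκ.reflTransGen hT))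

theorem eventually_exists_returning_near_orbit (hf : Continuous f) {κ τ : ℝ} (hκ : 0 < κ)
    (hτ : 0 < τ) (x : X) :
    ∀ᶠ T in atTop, ∃ η : ℕ → X, IsReturningPseudoOrbit f (nonWanderingSet f) κ η ∧
      ∀ t, dist (f^[T + t] x) (η t) < τ := by
  obtain ⟨γ, hγ, hmod⟩ := Metric.uniformContinuous_iff.1
    (CompactSpace.uniformContinuous_of_continuous hf) (κ / 4) (by positivity)
  set ρ := min τ (min γ (κ / 4))
  have hρ : 0 < ρ := lt_min hτ (lt_min hγ (by positivity))
  obtain ⟨t₀, ht₀⟩ := eventually_atTop.1 (eventually_exists_mem_nonWanderingSet_dist_lt x hρ)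
  choose ξ hξΩ hξ using fun t => ht₀ (t₀ + t) (by omega)
  have hps : IsPseudoOrbitOn f (nonWanderingSet f) (κ / 2) ξ := by
    refine fun t => ⟨hξΩ t, hξΩ (t + 1), ?_⟩
    have h₁ := hmod ((dist_comm _ _).trans_lt ((hξ t).trans_le
      ((min_le_right _ _).trans (min_le_left _ _))))
    have h₂ := (hξ (t + 1)).trans_le ((min_le_right _ _).trans (min_le_right _ _))
    rw [← add_assoc, iterate_succ_apply'] at h₂
    linarith [dist_triangle (f (ξ t)) (f (f^[t₀ + t] x)) (ξ (t + 1))]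
  obtain ⟨T₁, hT₁⟩ :=
    eventually_atTop.1 (eventually_isReturningPseudoOrbit_shift hf (half_lt_self hκ) hps)
  refine eventually_atTop.2 ⟨t₀ + T₁, fun T hT => ⟨_, hT₁ (T - t₀) (by omega), fun t => ?_⟩⟩
  have := hξ (T - t₀ + t)
  rw [show t₀ + (T - t₀ + t) = T + t by omega] at this
  exact this.trans_le (min_le_left _ _)

end Compact

section Entropy

variable {X : Type*} [MetricSpace X] {f : X → X}

theorem card_le_coverNum [CompactSpace X] (hf : Continuous f) {n : ℕ} {r : ℝ} (hr : 0 < r)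
    {ι : Type*} [Fintype ι] {y : ι → X}
    (hsep : Pairwise fun a b => ∃ i ≤ n, 2 * r ≤ dist (f^[i] (y a)) (f^[i] (y b))) :
    Fintype.card ι ≤ coverNum f n r := by
  obtain ⟨S₀, hS₀⟩ := exists_finset_forall_dist_iterate_lt hf n hr
  refine le_csInf ⟨_, S₀, rfl, hS₀⟩ ?_
  rintro _ ⟨S, rfl, hS⟩
  choose c hcS hc using fun a => hS (y a)
  have hinj : Injective c := by
    intro a b hab
    by_contra hne
    obtain ⟨i, hi, hsep⟩ := hsep hne
    have ha := hc a i hi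
    have hb := hc b i hi
    rw [hab] at ha
    linarith [dist_triangle_left (f^[i] (y a)) (f^[i] (y b)) (f^[i] (c b))]
  exact (Finset.card_le_card_of_injOn c (fun a _ => hcS a) hinj.injOn :)

theorem topEntropy_pos_of_two_pow_le_coverNum {r : ℝ} (hr : 0 < r) {L : ℕ} (hL : 0 < L)
    (h : ∀ k, 2 ^ k ≤ coverNum f (k * L) r) : 0 < topEntropy f := by
  have hc : 0 < Real.log 2 / L := by have := Real.log_pos one_lt_two; positivity
  refine (ENNReal.ofReal_pos.2 hc).trans_le (le_iSup₂_of_le r hr ?_)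
  refine le_limsup_of_frequently_le' (frequently_atTop.2 fun n => ⟨(n + 1) * L, by nlinarith, ?_⟩)
  refine ENNReal.ofReal_le_ofReal ?_
  calc Real.log 2 / L = Real.log (2 ^ (n + 1)) / ((n + 1) * L) := by
        rw [Real.log_pow]; push_cast; field_simp
    _ ≤ Real.log (coverNum f ((n + 1) * L) r) / ((n + 1 : ℕ) * L : ℕ) := by
        push_cast
        gcongr
        exact_mod_cast h (n + 1)

theorem two_pow_le_coverNum_of_periodic_pair [CompactSpace X] (hf : Continuous f) {S : Set X}
    {κ β δ ε r E : ℝ}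
    (hshadow : ∀ π : ℤ → X, IsPseudoOrbitOn f S δ π → ∃ y, ∀ i : ℕ, dist (f^[i] y) (π i) ≤ ε)
    {A B : ℤ → X} (hA : IsPseudoOrbitOn f S κ A) (hB : IsPseudoOrbitOn f S κ B) {L N : ℕ}
    (hAper : Periodic A L) (hBper : Periodic B L) (hNL : N < L) (h0 : dist (A 0) (B 0) ≤ β)
    (hN : E < dist (A N) (B N)) (hδ : κ + β ≤ δ) (hr : 0 < r) (hE : 2 * ε + 2 * r ≤ E) (k : ℕ) :
    2 ^ k ≤ coverNum f (k * L) r := by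
  have hL : (0 : ℤ) < L := by exact_mod_cast N.zero_le.trans_lt hNL
  -- `π σ` follows `B` on the `j`-th block of length `L` if `σ j` and `A` otherwise; the switches
  -- happen at multiples of `L`, where `A` and `B` are `β`-close.
  let c (σ : Fin k → Bool) (i : ℤ) : Bool := if h : (i / L).toNat < k then σ ⟨_, h⟩ else false
  let π (σ : Fin k → Bool) (i : ℤ) : X := if c σ i then B i else A i
  have hπ (σ : Fin k → Bool) : IsPseudoOrbitOn f S δ (π σ) := by
    refine (hA.ite hB (dist_nonneg.trans h0) fun i hi => ?_).mono hδ
    obtain ⟨m, hm⟩ := Int.dvd_add_one_of_ediv_ne hL fun (h : i / L = (i + 1) / L) =>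
      hi (by simp only [c, h])
    rwa [hm, mul_comm, ← smul_eq_mul, hAper.zsmul_eq, hBper.zsmul_eq]
  choose y hy using fun σ => hshadow _ (hπ σ)
  have hπ_block (σ : Fin k → Bool) (j : Fin k) :
      π σ ((j * L + N : ℕ) : ℤ) = if σ j then B N else A N := by
    have hdiv : (((j * L + N : ℕ) : ℤ) / L).toNat = j := by
      rw [← Int.natCast_div, Int.toNat_natCast, add_comm, Nat.add_mul_div_right _ _ (by omega),
        Nat.div_eq_of_lt hNL, zero_add]
    have hA' : A ((j * L + N : ℕ) : ℤ) = A N := by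
      push_cast; rw [add_comm]; exact hAper.nat_mul j N
    have hB' : B ((j * L + N : ℕ) : ℤ) = B N := by
      push_cast; rw [add_comm]; exact hBper.nat_mul j N
    simp only [π, c, hdiv, j.2, dif_pos, hA', hB']
  have hsep : Pairwise fun σ σ' => ∃ i ≤ k * L, 2 * r ≤ dist (f^[i] (y σ)) (f^[i] (y σ')) := by
    intro σ σ' hne
    obtain ⟨j, hj⟩ := Function.ne_iff.1 hne
    refine ⟨j * L + N, by nlinarith [j.2], ?_⟩
    have hfar : E < dist (π σ ((j * L + N : ℕ) : ℤ)) (π σ' ((j * L + N : ℕ) : ℤ)) := by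
      rw [hπ_block, hπ_block]
      cases h : σ j <;> cases h' : σ' j <;> simp_all [dist_comm]
    linarith [hy σ (j * L + N), hy σ' (j * L + N), dist_triangle4 (π σ ((j * L + N : ℕ) : ℤ))
      (f^[j * L + N] (y σ)) (f^[j * L + N] (y σ')) (π σ' ((j * L + N : ℕ) : ℤ)),
      dist_comm (π σ ((j * L + N : ℕ) : ℤ)) (f^[j * L + N] (y σ))]
  simpa using card_le_coverNum hf hr hsep

theorem topEntropy_pos_of_returning_pair [CompactSpace X] (hf : Continuous f) {S : Set X}
    {κ β δ ε r E : ℝ}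
    (hshadow : ∀ π : ℤ → X, IsPseudoOrbitOn f S δ π → ∃ y, ∀ i : ℕ, dist (f^[i] y) (π i) ≤ ε)
    {ξ ζ : ℕ → X} (hξ : IsReturningPseudoOrbit f S κ ξ) (hζ : IsReturningPseudoOrbit f S κ ζ)
    (h0 : dist (ξ 0) (ζ 0) ≤ β) {N : ℕ} (hN : E < dist (ξ N) (ζ N)) (hδ : κ + β ≤ δ)
    (hr : 0 < r) (hE : 2 * ε + 2 * r ≤ E) : 0 < topEntropy f := by
  obtain ⟨a, hNa, A, hAper, hA, hAξ⟩ := hξ.exists_periodic N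
  obtain ⟨b, hNb, B, hBper, hB, hBζ⟩ := hζ.exists_periodic N
  have hAL : Periodic A (a * b : ℕ) := by push_cast; rw [mul_comm]; exact hAper.nat_mul b
  have hBL : Periodic B (a * b : ℕ) := by push_cast; exact hBper.nat_mul a
  have hA0 : A 0 = ξ 0 := by exact_mod_cast hAξ 0 N.zero_le
  have hB0 : B 0 = ζ 0 := by exact_mod_cast hBζ 0 N.zero_le
  refine topEntropy_pos_of_two_pow_le_coverNum hr (Nat.mul_pos (by omega) (by omega))
    (two_pow_le_coverNum_of_periodic_pair hf hshadow hA hB hAL hBL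
      (hNa.trans_le (Nat.le_mul_of_pos_right a (by omega))) (by rwa [hA0, hB0])
      (by rwa [hAξ N le_rfl, hBζ N le_rfl]) hδ hr hE)

end Entropy

theorem exists_measure_inter_ball_pos {X : Type*} [PseudoMetricSpace X]
    [TopologicalSpace.SeparableSpace X] [MeasurableSpace X] {μ : Measure X} {s : Set X}
    (hs : μ s ≠ 0) {r : ℝ} (hr : 0 < r) : ∃ y, 0 < μ (s ∩ ball y r) := by
  obtain ⟨D, hDc, hDd⟩ := TopologicalSpace.exists_countable_dense X
  have hcover : s = ⋃ y ∈ D, s ∩ ball y r := by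
    rw [← inter_iUnion₂, (dense_iff_iUnion_ball D).1 hDd r hr, inter_univ]
  by_contra! h
  exact hs (hcover ▸ (measure_biUnion_null_iff hDc).2 fun y _ => nonpos_iff_eq_zero.1 (h y))

theorem exists_measure_phiSet_pos {X : Type*} [MetricSpace X] [CompactSpace X] [MeasurableSpace X]
    {f : X → X} (hf : Continuous f) (μ : Measure X) [NeZero μ] {κ β E e : ℝ} (hκ : 0 < κ)
    (hβ : 0 < β) (he : 0 < e) (hE : E < e)
    (hclose : ∀ ξ ζ : ℕ → X, ∀ N, IsReturningPseudoOrbit f (nonWanderingSet f) κ ξ →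
      IsReturningPseudoOrbit f (nonWanderingSet f) κ ζ → dist (ξ 0) (ζ 0) ≤ β →
      dist (ξ N) (ζ N) ≤ E) :
    ∃ x, 0 < μ (phiSet f e x) := by
  set τ := min (β / 4) ((e - E) / 2)
  have hτ : 0 < τ := lt_min (by positivity) (by linarith)
  have hτβ : τ ≤ β / 4 := min_le_left _ _
  have hτe : τ ≤ (e - E) / 2 := min_le_right _ _
  -- Two points of `G T` that stay close up to time `T` stay `e`-close forever, by `hclose`.
  let G (T : ℕ) : Set X := {x | ∃ η : ℕ → X,
    IsReturningPseudoOrbit f (nonWanderingSet f) κ η ∧ ∀ t, dist (f^[T + t] x) (η t) < τ}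
  have hGcover : (⋃ T, G T) = univ := iUnion_eq_univ_iff.2 fun x =>
    (eventually_exists_returning_near_orbit hf hκ hτ x).exists
  obtain ⟨T, hT⟩ := exists_measure_pos_of_not_measure_iUnion_null
    (hGcover ▸ Measure.measure_univ_ne_zero.2 (NeZero.ne μ))
  obtain ⟨γ, hγ, hmod⟩ := exists_pos_forall_dist_iterate_lt hf T (lt_min (half_pos hβ) he)
  obtain ⟨y, hy⟩ := exists_measure_inter_ball_pos hT.ne' (half_pos hγ)
  obtain ⟨x₀, hx₀G, hx₀y⟩ := nonempty_of_measure_ne_zero hy.ne'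
  refine ⟨x₀, hy.trans_le (measure_mono fun x ⟨hxG, hxy⟩ i => ?_)⟩
  have hx₀x : dist x₀ x < γ := by
    linarith [dist_triangle_right x₀ x y, mem_ball.1 hx₀y, mem_ball.1 hxy]
  obtain hi | hi := le_or_gt i T
  · exact (hmod _ _ hx₀x i hi).le.trans (min_le_right _ _)
  obtain ⟨η₀, hη₀, hη₀x₀⟩ := hx₀G
  obtain ⟨η, hη, hηx⟩ := hxG
  obtain ⟨N, rfl⟩ := Nat.exists_eq_add_of_le hi.le
  have h0 : dist (η₀ 0) (η 0) ≤ β := by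
    have h₁ := hη₀x₀ 0
    have h₂ := hηx 0
    have h₃ := (hmod _ _ hx₀x T le_rfl).trans_le (min_le_left _ _)
    rw [add_zero] at h₁ h₂
    linarith [dist_triangle4 (η₀ 0) (f^[T] x₀) (f^[T] x) (η 0), dist_comm (η₀ 0) (f^[T] x₀)]
  linarith [hclose η₀ η N hη₀ hη h0, hη₀x₀ N, hηx N, dist_comm (η N) (f^[T + N] x),
    dist_triangle4 (f^[T + N] x₀) (η₀ N) (η N) (f^[T + N] x)]

theorem POTPOn.exists_shadow {X : Type*} [MetricSpace X] {f : X ≃ₜ X} {S : Set X}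
    (h : POTPOn f S) {ε : ℝ} (hε : 0 < ε) : ∃ δ > 0, ∀ π : ℤ → X, IsPseudoOrbitOn f S δ π →
      ∃ y, ∀ i : ℕ, dist (f^[i] y) (π i) ≤ ε := by
  obtain ⟨δ, hδ, h⟩ := h ε hε
  refine ⟨δ, hδ, fun π hπ => ?_⟩
  obtain ⟨y, -, hy⟩ := h π (fun i => (hπ i).1) fun i => (hπ i).2.2
  exact ⟨y, fun i => by simpa [iterZ] using hy i⟩

theorem entropy_pos_of_potp_nonwandering_of_positivelyExpansive_general
    {X : Type*} [MetricSpace X] [CompactSpace X] [MeasurableSpace X]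
    (f : X ≃ₜ X) (hPOTP : POTPOn f (nonWanderingSet f))
    (μ : Measure X) [IsProbabilityMeasure μ]
    (hμ : IsPositivelyExpansive (⇑f) μ) :
    0 < topEntropy (⇑f) := by
  obtain ⟨e, he, hμe⟩ := hμ
  obtain ⟨δ, hδ, hshadow⟩ := hPOTP.exists_shadow (ε := e / 8) (by positivity)
  by_cases hbranch : ∃ ξ ζ : ℕ → X, ∃ N,
      IsReturningPseudoOrbit f (nonWanderingSet f) (δ / 2) ξ ∧
      IsReturningPseudoOrbit f (nonWanderingSet f) (δ / 2) ζ ∧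
      dist (ξ 0) (ζ 0) ≤ δ / 2 ∧ e / 2 < dist (ξ N) (ζ N)
  · obtain ⟨ξ, ζ, N, hξ, hζ, h0, hN⟩ := hbranch
    exact topEntropy_pos_of_returning_pair (r := e / 8) f.continuous hshadow hξ hζ h0 hN
      (by linarith) (by positivity) (by linarith)
  · push Not at hbranch
    obtain ⟨x, hx⟩ := exists_measure_phiSet_pos f.continuous μ (half_pos hδ) (half_pos hδ) he
      (half_lt_self he) hbranch
    exact absurd (hμe x) hx.ne'

/-- If `f` is a homeomorphism of a compact metric space whose restriction to the
nonwandering set has the POTP and `f` admits a positively expansive Borel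
probability measure, then `f` has positive topological entropy. -/
theorem entropy_pos_of_potp_nonwandering_of_positivelyExpansive
    {X : Type*} [MetricSpace X] [CompactSpace X] [MeasurableSpace X] [BorelSpace X]
    (f : X ≃ₜ X) (hPOTP : POTPOn f (nonWanderingSet f))
    (μ : Measure X) [IsProbabilityMeasure μ]
    (hμ : IsPositivelyExpansive (⇑f) μ) :
    0 < topEntropy (⇑f) :=
  entropy_pos_of_potp_nonwandering_of_positivelyExpansive_general f hPOTP μ hμ
end

section
/- Let f : X → X be a homeomorphism of a metric space X. If μ is a positively expansive Borel probability measure for f with expansivity constant δ, then the pushforward measure (f⁻¹)_*μ = μ ∘ f is also a positively expansive measure for f with expansivity constant δ. -/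
open MeasureTheory Set

/-- `μ` is positively expansive for `f` with expansivity constant `δ > 0`:
`μ (Φ_δ x) = 0` for every `x`. -/
def IsPositivelyExpansiveWith {X : Type*} [MetricSpace X] [MeasurableSpace X]
    (f : X → X) (μ : Measure X) (δ : ℝ) : Prop :=
  0 < δ ∧ ∀ x : X, μ (phiSet f δ x) = 0

theorem mapsTo_phiSet {X : Type*} [MetricSpace X] (f : X → X) (δ : ℝ) (x : X) :
    MapsTo f (phiSet f δ x) (phiSet f δ (f x)) := fun y hy i => by
  simpa only [← Function.iterate_succ_apply] using hy (i + 1)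

theorem isPositivelyExpansiveWith_map_symm_general
    {X : Type*} [MetricSpace X] [MeasurableSpace X] [BorelSpace X]
    (f : X ≃ₜ X) (μ : Measure X) {δ : ℝ}
    (hμ : IsPositivelyExpansiveWith (⇑f) μ δ) :
    IsPositivelyExpansiveWith (⇑f) (Measure.map (⇑f.symm) μ) δ := by
  obtain ⟨hδ, hnull⟩ := hμ
  refine ⟨hδ, fun x => ?_⟩
  -- Pushing forward along a measurable equivalence evaluates on arbitrary sets, so no
  -- measurability of `phiSet` is needed.
  rw [← f.symm.toMeasurableEquiv_coe, MeasurableEquiv.map_apply, f.symm.toMeasurableEquiv_coe,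
    Homeomorph.preimage_symm]
  exact measure_mono_null (mapsTo_phiSet f δ x).image_subset (hnull (f x))

/-- If `μ` is a positively expansive measure for the homeomorphism `f` with
expansivity constant `δ`, then so is the pushforward `(f⁻¹)_* μ = μ ∘ f`. -/
theorem isPositivelyExpansiveWith_map_symm
    {X : Type*} [MetricSpace X] [MeasurableSpace X] [BorelSpace X]
    (f : X ≃ₜ X) (μ : Measure X) [IsProbabilityMeasure μ] {δ : ℝ}
    (hμ : IsPositivelyExpansiveWith (⇑f) μ δ) :
    IsPositivelyExpansiveWith (⇑f) (Measure.map (⇑f.symm) μ) δ :=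
  isPositivelyExpansiveWith_map_symm_general f μ hμ
end

section
/- Let f : X → X be a homeomorphism of a metric space X and μ a positively expansive Borel probability measure for f with expansivity constant δ. Then for every n ≥ 1 the Cesàro average μ_n = (1/n) ∑_{i=0}^{n-1} (f^{-i})_*μ is a positively expansive Borel probability measure for f with the same expansivity constant δ. -/
open MeasureTheory Set Finset ENNReal

/- Proof: each `(f⁻¹)^i_* μ` is again positively expansive, because `f^i` maps `Φ_δ(x)`
into `Φ_δ(f^i x)`, so `(f⁻¹)^i_* μ (Φ_δ(x)) ≤ μ (Φ_δ(f^i x)) = 0`; a scaled finite sum of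
measures vanishing on every `Φ_δ(x)` vanishes there too. -/

section PhiSet

variable {X : Type*} [MetricSpace X] {f : X → X} {δ : ℝ}

theorem isClosed_phiSet (hf : Continuous f) (x : X) : IsClosed (phiSet f δ x) := by
  simp only [phiSet, ofPred_forall]
  exact isClosed_iInter fun i =>
    isClosed_le (continuous_const.dist (hf.iterate i)) continuous_const

theorem mapsTo_iterate_phiSet (i : ℕ) (x : X) :
    MapsTo f^[i] (phiSet f δ x) (phiSet f δ (f^[i] x)) := by
  intro y hy j
  simpa only [← Function.iterate_add_apply] using hy (j + i)

theorem preimage_phiSet_subset {g : X → X} (hfg : Function.LeftInverse f g) (x : X) :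
    g ⁻¹' phiSet f δ x ⊆ phiSet f δ (f x) := fun y hy => by
  simpa only [Function.iterate_one, hfg y] using mapsTo_iterate_phiSet 1 x hy

end PhiSet

namespace IsPositivelyExpansiveWith

variable {X : Type*} [MetricSpace X] [MeasurableSpace X] {f : X → X} {δ : ℝ}

theorem map_of_leftInverse [BorelSpace X] {μ : Measure X}
    (hμ : IsPositivelyExpansiveWith f μ δ) (hf : Continuous f) {g : X → X}
    (hg : Measurable g) (hfg : Function.LeftInverse f g) :
    IsPositivelyExpansiveWith f (μ.map g) δ := by
  refine ⟨hμ.1, fun x => ?_⟩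
  rw [Measure.map_apply hg (isClosed_phiSet hf x).measurableSet]
  exact measure_mono_null (preimage_phiSet_subset hfg x) (hμ.2 (f x))

theorem map_iterate_of_leftInverse [BorelSpace X] {μ : Measure X}
    (hμ : IsPositivelyExpansiveWith f μ δ) (hf : Continuous f) {g : X → X}
    (hg : Measurable g) (hfg : Function.LeftInverse f g) (i : ℕ) :
    IsPositivelyExpansiveWith f (μ.map g^[i]) δ := by
  induction i with
  | zero => simpa using hμ
  | succ i ih =>
    rw [Function.iterate_succ', ← Measure.map_map hg (hg.iterate i)]
    exact ih.map_of_leftInverse hf hg hfg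

theorem finsetSum {ι : Type*} {s : Finset ι} {μ : ι → Measure X} (hδ : 0 < δ)
    (hμ : ∀ i ∈ s, IsPositivelyExpansiveWith f (μ i) δ) :
    IsPositivelyExpansiveWith f (∑ i ∈ s, μ i) δ :=
  ⟨hδ, fun x => by
    rw [Measure.finsetSum_apply]
    exact Finset.sum_eq_zero fun i hi => (hμ i hi).2 x⟩

theorem smul {μ : Measure X} (hμ : IsPositivelyExpansiveWith f μ δ) (c : ℝ≥0∞) :
    IsPositivelyExpansiveWith f (c • μ) δ :=
  ⟨hμ.1, fun x => by rw [Measure.smul_apply, hμ.2 x, smul_zero]⟩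

end IsPositivelyExpansiveWith

theorem isProbabilityMeasure_inv_card_smul_finsetSum {X ι : Type*} [MeasurableSpace X]
    {s : Finset ι} (hs : s.Nonempty) {μ : ι → Measure X}
    (hμ : ∀ i ∈ s, IsProbabilityMeasure (μ i)) :
    IsProbabilityMeasure ((#s : ℝ≥0∞)⁻¹ • ∑ i ∈ s, μ i) := by
  constructor
  rw [Measure.smul_apply, Measure.finsetSum_apply, Finset.sum_congr rfl fun i hi =>
    (hμ i hi).measure_univ, Finset.sum_const, nsmul_one, smul_eq_mul,
    ENNReal.inv_mul_cancel (by simpa using hs.ne_empty) (natCast_ne_top _)]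

/-- If `μ` is positively expansive for the homeomorphism `f` with expansivity
constant `δ`, then for every `n ≥ 1` the Cesàro average
`μ_n = (1/n) ∑_{i=0}^{n-1} (f^{-i})_* μ` is a positively expansive probability
measure for `f` with the same expansivity constant `δ`. -/
theorem cesaro_average_isPositivelyExpansiveWith
    {X : Type*} [MetricSpace X] [MeasurableSpace X] [BorelSpace X]
    (f : X ≃ₜ X) (μ : Measure X) [IsProbabilityMeasure μ] {δ : ℝ}
    (hμ : IsPositivelyExpansiveWith (⇑f) μ δ) (n : ℕ) (hn : 1 ≤ n) :
    IsProbabilityMeasure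
        ((n : ℝ≥0∞)⁻¹ • ∑ i ∈ Finset.range n, Measure.map ((⇑f.symm)^[i]) μ) ∧
      IsPositivelyExpansiveWith (⇑f)
        ((n : ℝ≥0∞)⁻¹ • ∑ i ∈ Finset.range n, Measure.map ((⇑f.symm)^[i]) μ) δ := by
  have hf_symm : Measurable f.symm := f.symm.continuous.measurable
  constructor
  · simpa only [card_range] using isProbabilityMeasure_inv_card_smul_finsetSum
      ⟨0, mem_range.2 hn⟩ fun i _ =>
        Measure.isProbabilityMeasure_map (hf_symm.iterate i).aemeasurable
  · refine .smul (.finsetSum hμ.1 fun i _ => ?_) _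
    exact hμ.map_iterate_of_leftInverse f.continuous hf_symm f.apply_symm_apply i
end

section
/- Let f : X → X be an equicontinuous homeomorphism of a compact metric space X. Then f admits no positively expansive Borel probability measure. -/
open MeasureTheory Set

/-- `f` is equicontinuous: for every `ε > 0` there is `δ > 0` such that
`δ`-close points stay `ε`-close under all forward iterates. -/
def EquicontinuousMap {X : Type*} [MetricSpace X] (f : X → X) : Prop :=
  ∀ ε > (0 : ℝ), ∃ δ > (0 : ℝ), ∀ x y : X, dist x y < δ →
    ∀ i : ℕ, dist (f^[i] x) (f^[i] y) < ε

/-! Equicontinuity puts a ball of a fixed radius `δ` around `x` inside `Φ_e(x)`, so positive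
expansiveness makes every `δ`-ball null, and by compactness finitely many of them cover `X`. -/

theorem EquicontinuousMap.exists_ball_subset_phiSet {X : Type*} [MetricSpace X] {f : X → X}
    (hf : EquicontinuousMap f) {e : ℝ} (he : 0 < e) :
    ∃ δ > 0, ∀ x : X, Metric.ball x δ ⊆ phiSet f e x := by
  obtain ⟨δ, hδ, hclose⟩ := hf e he
  exact ⟨δ, hδ, fun x y hy i => (hclose x y (Metric.mem_ball'.mp hy) i).le⟩

theorem IsPositivelyExpansive.eq_zero_of_equicontinuousMap {X : Type*} [MetricSpace X]
    [CompactSpace X] [MeasurableSpace X] {f : X → X} {μ : Measure X}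
    (hμ : IsPositivelyExpansive f μ) (hf : EquicontinuousMap f) : μ = 0 := by
  obtain ⟨e, he, hnull⟩ := hμ
  obtain ⟨δ, hδ, hball⟩ := hf.exists_ball_subset_phiSet he
  rw [← Measure.measure_univ_eq_zero]
  refine isCompact_univ.measure_zero_of_nhdsWithin fun x _ => ⟨Metric.ball x δ, ?_, ?_⟩
  · simpa only [nhdsWithin_univ] using Metric.ball_mem_nhds x hδ
  · exact measure_mono_null (hball x) (hnull x)

theorem not_exists_positivelyExpansive_of_equicontinuous_general
    {X : Type*} [MetricSpace X] [CompactSpace X] [MeasurableSpace X]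
    (f : X ≃ₜ X) (heq : EquicontinuousMap (⇑f)) :
    ¬ ∃ μ : Measure X, IsProbabilityMeasure μ ∧ IsPositivelyExpansive (⇑f) μ := by
  rintro ⟨μ, hprob, hexp⟩
  exact IsProbabilityMeasure.ne_zero μ (hexp.eq_zero_of_equicontinuousMap heq)

/-- An equicontinuous homeomorphism of a compact metric space has no positively
expansive Borel probability measure. -/
theorem not_exists_positivelyExpansive_of_equicontinuous
    {X : Type*} [MetricSpace X] [CompactSpace X] [MeasurableSpace X] [BorelSpace X]
    (f : X ≃ₜ X) (heq : EquicontinuousMap (⇑f)) :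
    ¬ ∃ μ : Measure X, IsProbabilityMeasure μ ∧ IsPositivelyExpansive (⇑f) μ :=
  not_exists_positivelyExpansive_of_equicontinuous_general f heq
end
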